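/- Let λ ⊢ n with j := n - λ₁, let μ ⊢ n-k with μ ⊆ λ, and set l := k - λ₁ + μ₁ ≥ 1 (the number of boxes removed from rows below the first). Then d_μ · d_{λ\μ} ≤ (4^j · k / n)^l · d_λ. -/

import Mathlib

open Finset


/-- A standard filling of a (possibly skew) set of cells `c` with `|c|` boxes:
a bijection from the cells onto `{1,…,|c|}`, strictly increasing along rows
and columns. -/
def IsStdFilling (c : Finset (ℕ × ℕ)) (S : ℕ × ℕ → ℕ) : Prop :=
  Set.BijOn S ↑c (Set.Icc 1 c.card) ∧
    ∀ x ∈ c, ∀ y ∈ c, x.1 ≤ y.1 → x.2 ≤ y.2 → x ≠ y → S x < S y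

/-- The number of standard (skew) Young tableaux of a given cell set
(fillings are normalized to be `0` off the cells). -/
noncomputable def stdCount (c : Finset (ℕ × ℕ)) : ℕ :=
  Nat.card {S : ℕ × ℕ → ℕ // IsStdFilling c S ∧ ∀ x ∉ c, S x = 0}


abbrev StdT (c : Finset (ℕ × ℕ)) := {S : ℕ × ℕ → ℕ // IsStdFilling c S ∧ ∀ x ∉ c, S x = 0}

lemma std_mem_Icc {c : Finset (ℕ × ℕ)} {S : ℕ × ℕ → ℕ} (h : IsStdFilling c S)
    {x : ℕ × ℕ} (hx : x ∈ c) : S x ∈ Set.Icc 1 c.card := h.1.1 hx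

noncomputable instance stdFinite (c : Finset (ℕ × ℕ)) : Finite (StdT c) := by
  let f : StdT c → (↑c → ↑(Finset.Icc 1 c.card)) := fun S x =>
    ⟨S.1 x, by
      have := std_mem_Icc S.2.1 x.2
      simp only [Finset.mem_Icc]; exact ⟨this.1, this.2⟩⟩
  have hf : Function.Injective f := by
    intro S T h
    ext z
    by_cases hz : z ∈ c
    · exact congrArg Subtype.val (congrFun h ⟨z, hz⟩)
    · rw [S.2.2 z hz, T.2.2 z hz]
  exact Finite.of_injective f hf

/-- `nth s i` : the `i`-th smallest element (0-indexed) of `s`. -/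
def nth (s : Finset ℕ) (i : ℕ) : ℕ := (s.sort (·≤·)).getD i 0

lemma nth_eq_get (s : Finset ℕ) {i : ℕ} (hi : i < s.card) :
    nth s i = (s.sort (·≤·)).get ⟨i, by rwa [Finset.length_sort]⟩ := by
  have hlen : i < (s.sort (·≤·)).length := by rwa [Finset.length_sort]
  simp only [nth, List.getD_eq_getElem?_getD, List.getElem?_eq_getElem hlen, Option.getD_some,
    List.get_eq_getElem]

lemma nth_mem {s : Finset ℕ} {i : ℕ} (hi : i < s.card) : nth s i ∈ s := by
  rw [nth_eq_get s hi]
  rw [List.get_eq_getElem]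
  exact (Finset.mem_sort (α := ℕ) (·≤·)).1 (List.getElem_mem _)

lemma nth_strictMono {s : Finset ℕ} {i j : ℕ} (hij : i < j) (hj : j < s.card) :
    nth s i < nth s j := by
  rw [nth_eq_get s (hij.trans hj), nth_eq_get s hj]
  exact (Finset.sortedLT_sort s).strictMono_get (by simpa using hij)

lemma nth_mono {s : Finset ℕ} {i j : ℕ} (hij : i ≤ j) (hj : j < s.card) :
    nth s i ≤ nth s j := by
  rcases eq_or_lt_of_le hij with rfl | h
  · exact le_rfl
  · exact (nth_strictMono h hj).le

lemma nth_injOn {s : Finset ℕ} {i j : ℕ} (hi : i < s.card) (hj : j < s.card)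
    (h : nth s i = nth s j) : i = j := by
  rcases lt_trichotomy i j with h' | h' | h'
  · exact absurd h (nth_strictMono h' hj).ne
  · exact h'
  · exact absurd h.symm (nth_strictMono h' hi).ne

/-- The filter of elements `≤ nth s i` is exactly the first `i+1`. -/
lemma rank_nth {s : Finset ℕ} {i : ℕ} (hi : i < s.card) :
    (s.filter (· ≤ nth s i)).card = i + 1 := by
  have key : s.filter (· ≤ nth s i) = (Finset.range (i+1)).image (nth s) := by
    ext w
    simp only [Finset.mem_filter, Finset.mem_image, Finset.mem_range]
    constructor
    · rintro ⟨hw, hle⟩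
      have : w ∈ s.sort (·≤·) := (Finset.mem_sort _).2 hw
      obtain ⟨⟨j, hj⟩, hjw⟩ := List.get_of_mem this
      rw [Finset.length_sort] at hj
      refine ⟨j, ?_, by rw [nth_eq_get s hj]; exact hjw⟩
      by_contra hji
      push_neg at hji
      have : nth s i < nth s j := nth_strictMono (by omega) hj
      rw [nth_eq_get s hj, hjw] at this
      omega
    · rintro ⟨j, hj, rfl⟩
      exact ⟨nth_mem (by omega), nth_mono (by omega) hi⟩
  rw [key, Finset.card_image_of_injOn, Finset.card_range]
  intro a ha b hb hab
  simp only [Finset.coe_range, Set.mem_Iio] at ha hb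
  exact nth_injOn (by omega) (by omega) hab

lemma nth_le_of_rank {s : Finset ℕ} {i v : ℕ} (hi : i < s.card)
    (h : i + 1 ≤ (s.filter (· ≤ v)).card) : nth s i ≤ v := by
  by_contra hv
  push_neg at hv
  have key : s.filter (· ≤ v) ⊆ (Finset.range i).image (nth s) := by
    intro w hw
    rw [Finset.mem_filter] at hw
    have : w ∈ s.sort (·≤·) := (Finset.mem_sort _).2 hw.1
    obtain ⟨⟨j, hj⟩, hjw⟩ := List.get_of_mem this
    rw [Finset.length_sort] at hj
    simp only [Finset.mem_image, Finset.mem_range]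
    refine ⟨j, ?_, by rw [nth_eq_get s hj]; exact hjw⟩
    by_contra hji
    push_neg at hji
    have : nth s i ≤ nth s j := nth_mono hji hj
    rw [nth_eq_get s hj, hjw] at this
    omega
  have := Finset.card_le_card key
  have := Finset.card_image_le (s := Finset.range i) (f := nth s)
  simp only [Finset.card_range] at this
  omega

lemma nth_rank_self {s : Finset ℕ} {v : ℕ} (hv : v ∈ s) :
    nth s ((s.filter (· ≤ v)).card - 1) = v := by
  have : v ∈ s.sort (·≤·) := (Finset.mem_sort _).2 hv
  obtain ⟨⟨j, hj⟩, hjw⟩ := List.get_of_mem this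
  rw [Finset.length_sort] at hj
  have hnth : nth s j = v := by rw [nth_eq_get s hj]; exact hjw
  rw [← hnth, rank_nth hj]
  simp [hnth]

lemma nth_image_range {s : Finset ℕ} : (Finset.range s.card).image (nth s) = s := by
  apply Finset.eq_of_subset_of_card_le
  · intro w hw
    simp only [Finset.mem_image, Finset.mem_range] at hw
    obtain ⟨j, hj, rfl⟩ := hw
    exact nth_mem hj
  · rw [Finset.card_image_of_injOn, Finset.card_range]
    intro a ha b hb hab
    simp only [Finset.coe_range, Set.mem_Iio] at ha hb
    exact nth_injOn ha hb hab

lemma stdCount_le_of_inj {c d : Finset (ℕ × ℕ)} (f : StdT c → StdT d)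
    (hf : Function.Injective f) : stdCount c ≤ stdCount d :=
  Nat.card_le_card_of_injective f hf

/-- Removing a maximal cell can only decrease the count. -/
lemma stdCount_erase_le {c : Finset (ℕ × ℕ)} {b : ℕ × ℕ} (hb : b ∈ c)
    (hmax : ∀ y ∈ c, b.1 ≤ y.1 → b.2 ≤ y.2 → y = b) :
    stdCount (c.erase b) ≤ stdCount c := by
  have hm1 : (c.erase b).card = c.card - 1 := Finset.card_erase_of_mem hb
  have hm0 : 1 ≤ c.card := Finset.card_pos.2 ⟨b, hb⟩
  have key : ∀ S : StdT (c.erase b),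
      IsStdFilling c (fun x => if x = b then c.card else S.1 x) ∧
      ∀ x ∉ c, (if x = b then c.card else S.1 x) = 0 := by
    rintro ⟨S, ⟨⟨hmap, hinj, hsurj⟩, hmono⟩, hzero⟩
    have hval : ∀ x ∈ c.erase b, 1 ≤ S x ∧ S x ≤ c.card - 1 := by
      intro x hx
      have := hmap (by exact_mod_cast hx)
      rw [hm1] at this
      exact ⟨this.1, this.2⟩
    refine ⟨⟨⟨?_, ?_, ?_⟩, ?_⟩, ?_⟩
    · intro x hx
      simp only [Finset.mem_coe] at hx
      by_cases hxb : x = b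
      · simp [hxb, hm0]
      · simp only [hxb, if_false]
        have := hval x (Finset.mem_erase.2 ⟨hxb, hx⟩)
        exact ⟨this.1, this.2.trans (by omega)⟩
    · intro x hx y hy hxy
      simp only [Finset.mem_coe] at hx hy
      by_cases hxb : x = b <;> by_cases hyb : y = b
      · rw [hxb, hyb]
      · simp only [hxb, hyb, if_true, if_false] at hxy
        have := hval y (Finset.mem_erase.2 ⟨hyb, hy⟩)
        omega
      · simp only [hxb, hyb, if_true, if_false] at hxy
        have := hval x (Finset.mem_erase.2 ⟨hxb, hx⟩)
        omega
      · simp only [hxb, hyb, if_false] at hxy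
        exact hinj (by simp [Finset.mem_erase, hxb, hx]) (by simp [Finset.mem_erase, hyb, hy]) hxy
    · intro v hv
      by_cases hvm : v = c.card
      · exact ⟨b, by simpa using hb, by simp [hvm]⟩
      · have hv' : v ∈ Set.Icc 1 ((c.erase b).card) := by
          rw [hm1]; constructor
          · exact hv.1
          · have := hv.2; omega
        obtain ⟨x, hx, hxv⟩ := hsurj hv'
        have hx' : x ∈ c.erase b := by exact_mod_cast hx
        have hxb : x ≠ b := (Finset.mem_erase.1 hx').1
        exact ⟨x, by simpa using Finset.mem_of_mem_erase hx', by simp [hxb, hxv]⟩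
    · intro x hx y hy h1 h2 hne
      by_cases hxb : x = b
      · have hyb : y = b := hmax y hy (by rw [← hxb]; exact h1) (by rw [← hxb]; exact h2)
        exact absurd (hxb.trans hyb.symm) hne
      · by_cases hyb : y = b
        · simp only [hxb, hyb, if_false, if_true]
          have := hval x (Finset.mem_erase.2 ⟨hxb, hx⟩)
          omega
        · simp only [hxb, hyb, if_false]
          exact hmono x (Finset.mem_erase.2 ⟨hxb, hx⟩) y (Finset.mem_erase.2 ⟨hyb, hy⟩) h1 h2 hne
    · intro x hx
      have hxb : x ≠ b := fun h => hx (h ▸ hb)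
      simp only [hxb, if_false]
      exact hzero x (fun h => hx (Finset.mem_of_mem_erase h))
  let F : StdT (c.erase b) → StdT c := fun S =>
    ⟨fun x => if x = b then c.card else S.1 x, key S⟩
  refine stdCount_le_of_inj F ?_
  intro S T h
  have h' := congrArg Subtype.val h
  ext z
  by_cases hzb : z = b
  · rw [S.2.2 z (by simp [hzb]), T.2.2 z (by simp [hzb])]
  · have := congrFun h' z
    simpa [F, hzb] using this

/-- Crude factorial bound. -/
lemma stdCount_le_factorial (c : Finset (ℕ × ℕ)) : stdCount c ≤ c.card.factorial := by
  classical
  have : stdCount c ≤ Nat.card (↑c ↪ ↑(Finset.Icc 1 c.card)) := by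
    refine Nat.card_le_card_of_injective
      (fun S => ⟨fun x => ⟨S.1 x, by
        have := S.2.1.1.1 x.2
        simp only [Finset.mem_Icc]; exact ⟨this.1, this.2⟩⟩, ?_⟩) ?_
    · intro x y hxy
      have := congrArg Subtype.val hxy
      exact Subtype.ext (S.2.1.1.2.1 x.2 y.2 this)
    · intro S T h
      ext z
      by_cases hz : z ∈ c
      · exact congrArg Subtype.val (congrFun (congrArg (fun e => e.toFun) h) ⟨z, hz⟩ :
          (⟨S.1 z, _⟩ : ↑(Finset.Icc 1 c.card)) = ⟨T.1 z, _⟩)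
      · rw [S.2.2 z hz, T.2.2 z hz]
  refine this.trans ?_
  rw [Nat.card_eq_fintype_card, Fintype.card_embedding_eq, Fintype.card_coe, Fintype.card_coe,
    Nat.card_Icc]
  simp [Nat.descFactorial_self]

/-- On a one-row cell set, a standard filling must be the rank function. -/
lemma std_row_eq_rank {c : Finset (ℕ × ℕ)} (hrow : ∀ x ∈ c, x.1 = 0)
    {S : ℕ × ℕ → ℕ} (hS : IsStdFilling c S) :
    ∀ x ∈ c, S x = (c.filter (fun y => y.2 ≤ x.2)).card := by
  classical
  set r : ℕ × ℕ → ℕ := fun x => (c.filter (fun y => y.2 ≤ x.2)).card with hr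
  obtain ⟨⟨hmap, hinj, hsurj⟩, hmono⟩ := hS
  -- pointwise r x ≤ S x
  have hple : ∀ x ∈ c, r x ≤ S x := by
    intro x hx
    have himg : (c.filter (fun y => y.2 ≤ x.2)).image S ⊆ Finset.Icc 1 (S x) := by
      intro v hv
      simp only [Finset.mem_image, Finset.mem_filter] at hv
      obtain ⟨y, ⟨hy, hy2⟩, rfl⟩ := hv
      have h1 : 1 ≤ S y := (hmap (Finset.mem_coe.2 hy)).1
      by_cases hxy : y = x
      · subst hxy; simp [h1]
      · have : S y < S x := hmono y hy x hx (by rw [hrow y hy, hrow x hx]) hy2 hxy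
        simp [h1]; omega
    have hcard : ((c.filter (fun y => y.2 ≤ x.2)).image S).card = r x := by
      rw [Finset.card_image_of_injOn]
      exact fun a ha b hb => hinj (Finset.mem_coe.2 (Finset.mem_filter.1 ha).1)
        (Finset.mem_coe.2 (Finset.mem_filter.1 hb).1)
    have := Finset.card_le_card himg
    rw [hcard, Nat.card_Icc] at this
    omega
  -- r is injective on c with image inside Icc 1 m
  have hrinj : Set.InjOn r ↑c := by
    intro x hx y hy hxy
    simp only [Finset.mem_coe] at hx hy
    by_contra hne
    have h2 : x.2 ≠ y.2 := by
      intro h2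
      exact hne (Prod.ext (by rw [hrow x hx, hrow y hy]) h2)
    have key : ∀ a b : ℕ × ℕ, a ∈ c → b ∈ c → a.2 < b.2 → r a < r b := by
      intro a b ha hb hab
      apply Finset.card_lt_card
      refine ⟨fun z hz => ?_, fun hsub => ?_⟩
      · simp only [Finset.mem_filter] at hz ⊢
        exact ⟨hz.1, by omega⟩
      · have := hsub (Finset.mem_filter.2 ⟨hb, le_refl _⟩)
        simp only [Finset.mem_filter] at this
        omega
    rcases lt_or_gt_of_ne h2 with h | h
    · exact absurd hxy (key x y hx hy h).ne
    · exact absurd hxy.symm (key y x hy hx h).ne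
  have hrmap : ∀ x ∈ c, r x ∈ Finset.Icc 1 c.card := by
    intro x hx
    refine Finset.mem_Icc.2 ⟨?_, ?_⟩
    · exact Finset.card_pos.2 ⟨x, Finset.mem_filter.2 ⟨hx, le_refl _⟩⟩
    · exact Finset.card_le_card (Finset.filter_subset _ _)
  -- sums are equal
  have himS : c.image S = Finset.Icc 1 c.card := by
    apply Finset.eq_of_subset_of_card_le
    · intro v hv
      obtain ⟨y, hy, rfl⟩ := Finset.mem_image.1 hv
      have := hmap (Finset.mem_coe.2 hy)
      exact Finset.mem_Icc.2 ⟨this.1, this.2⟩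
    · rw [Finset.card_image_of_injOn hinj, Nat.card_Icc]; omega
  have himr : c.image r = Finset.Icc 1 c.card := by
    apply Finset.eq_of_subset_of_card_le
    · intro v hv
      obtain ⟨y, hy, rfl⟩ := Finset.mem_image.1 hv
      exact hrmap y hy
    · rw [Finset.card_image_of_injOn hrinj, Nat.card_Icc]; omega
  have hsums : ∑ x ∈ c, S x = ∑ x ∈ c, r x := by
    have e1 : ∑ x ∈ c, S x = ∑ v ∈ c.image S, v := by
      rw [Finset.sum_image (fun a ha b hb => hinj (Finset.mem_coe.2 ha) (Finset.mem_coe.2 hb))]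
    have e2 : ∑ x ∈ c, r x = ∑ v ∈ c.image r, v := by
      rw [Finset.sum_image (fun a ha b hb => hrinj (Finset.mem_coe.2 ha) (Finset.mem_coe.2 hb))]
    rw [e1, e2, himS, himr]
  -- conclude pointwise equality
  intro x hx
  by_contra hne
  have hlt : r x < S x := lt_of_le_of_ne (hple x hx) (fun h => hne h.symm)
  have : ∑ x ∈ c, r x < ∑ x ∈ c, S x :=
    Finset.sum_lt_sum (fun i hi => hple i hi) ⟨x, hx, hlt⟩
  omega

lemma stdCount_row_le_one {c : Finset (ℕ × ℕ)} (hrow : ∀ x ∈ c, x.1 = 0) :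
    stdCount c ≤ 1 := by
  have : Subsingleton (StdT c) := by
    constructor
    rintro ⟨S, hS, hS0⟩ ⟨T, hT, hT0⟩
    refine Subtype.ext (funext fun z => ?_)
    show S z = T z
    by_cases hz : z ∈ c
    · rw [std_row_eq_rank hrow hS z hz, std_row_eq_rank hrow hT z hz]
    · rw [hS0 z hz, hT0 z hz]
  show Nat.card (StdT c) ≤ 1
  rcases isEmpty_or_nonempty (StdT c) with h | h
  · rw [Nat.card_of_isEmpty]; omega
  · rw [Nat.card_unique]

/-- Standardization of a filling to a subset of the cells. -/
def restrictStd (A : Finset (ℕ × ℕ)) (S : ℕ × ℕ → ℕ) : ℕ × ℕ → ℕ :=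
  fun x => if x ∈ A then (A.filter (fun y => S y ≤ S x)).card else 0

section restrict
variable {c A : Finset (ℕ × ℕ)} {S : ℕ × ℕ → ℕ}

lemma restrictStd_lt (hinj : Set.InjOn S ↑c) (hAc : A ⊆ c) {x y : ℕ × ℕ}
    (hx : x ∈ A) (hy : y ∈ A) (hxy : S x < S y) : restrictStd A S x < restrictStd A S y := by
  simp only [restrictStd, hx, hy, if_true]
  apply Finset.card_lt_card
  constructor
  · intro z hz
    simp only [Finset.mem_filter] at hz ⊢
    exact ⟨hz.1, by omega⟩
  · intro hsub
    have := hsub (Finset.mem_filter.2 ⟨hy, le_refl _⟩)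
    simp only [Finset.mem_filter] at this
    omega

lemma restrictStd_isStd (hS : IsStdFilling c S) (hAc : A ⊆ c) :
    IsStdFilling A (restrictStd A S) ∧ ∀ x ∉ A, restrictStd A S x = 0 := by
  obtain ⟨⟨hmap, hinj, hsurj⟩, hmono⟩ := hS
  have hval : ∀ x ∈ A, restrictStd A S x ∈ Set.Icc 1 A.card := by
    intro x hx
    simp only [restrictStd, hx, if_true]
    exact ⟨Finset.card_pos.2 ⟨x, Finset.mem_filter.2 ⟨hx, le_refl _⟩⟩,
      Finset.card_le_card (Finset.filter_subset _ _)⟩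
  have hSne : ∀ x ∈ A, ∀ y ∈ A, x ≠ y → S x ≠ S y := by
    intro x hx y hy hne h
    exact hne (hinj (Finset.mem_coe.2 (hAc hx)) (Finset.mem_coe.2 (hAc hy)) h)
  have hrinj : Set.InjOn (restrictStd A S) ↑A := by
    intro x hx y hy h
    simp only [Finset.mem_coe] at hx hy
    by_contra hne
    rcases lt_or_gt_of_ne (hSne x hx y hy hne) with hlt | hlt
    · exact absurd h (restrictStd_lt hinj hAc hx hy hlt).ne
    · exact absurd h.symm (restrictStd_lt hinj hAc hy hx hlt).ne
  have him : A.image (restrictStd A S) = Finset.Icc 1 A.card := by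
    apply Finset.eq_of_subset_of_card_le
    · intro v hv
      obtain ⟨y, hy, rfl⟩ := Finset.mem_image.1 hv
      have := hval y hy
      exact Finset.mem_Icc.2 ⟨this.1, this.2⟩
    · rw [Finset.card_image_of_injOn hrinj, Nat.card_Icc]; omega
  refine ⟨⟨⟨?_, hrinj, ?_⟩, ?_⟩, fun x hx => by simp [restrictStd, hx]⟩
  · intro x hx; exact hval x (Finset.mem_coe.1 hx)
  · intro v hv
    have : v ∈ Finset.Icc 1 A.card := Finset.mem_Icc.2 ⟨hv.1, hv.2⟩
    rw [← him] at this
    obtain ⟨y, hy, hyv⟩ := Finset.mem_image.1 this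
    exact ⟨y, Finset.mem_coe.2 hy, hyv⟩
  · intro x hx y hy h1 h2 hne
    exact restrictStd_lt hinj hAc hx hy (hmono x (hAc hx) y (hAc hy) h1 h2 hne)

lemma restrictStd_recover (hinj : Set.InjOn S ↑c) (hAc : A ⊆ c) {x : ℕ × ℕ} (hx : x ∈ A) :
    nth (A.image S) (restrictStd A S x - 1) = S x := by
  have hfe : (A.filter (fun y => S y ≤ S x)).image S = (A.image S).filter (· ≤ S x) := by
    ext v
    simp only [Finset.mem_image, Finset.mem_filter]
    constructor
    · rintro ⟨y, ⟨hyA, hyle⟩, rfl⟩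
      exact ⟨⟨y, hyA, rfl⟩, hyle⟩
    · rintro ⟨⟨y, hy, rfl⟩, hle⟩
      exact ⟨y, ⟨hy, hle⟩, rfl⟩
  have hcards : restrictStd A S x = ((A.image S).filter (· ≤ S x)).card := by
    simp only [restrictStd, hx, if_true]
    rw [← hfe, Finset.card_image_of_injOn]
    intro a ha b hb
    exact hinj (Finset.mem_coe.2 (hAc (Finset.mem_filter.1 ha).1))
      (Finset.mem_coe.2 (hAc (Finset.mem_filter.1 hb).1))
  rw [hcards]
  exact nth_rank_self (Finset.mem_image.2 ⟨x, hx, rfl⟩)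

end restrict

/-- The split bound. -/
lemma stdCount_union_le {A B : Finset (ℕ × ℕ)} (hd : Disjoint A B) :
    stdCount (A ∪ B) ≤ (A ∪ B).card.choose A.card * stdCount A * stdCount B := by
  classical
  set c := A ∪ B with hc
  set m := c.card with hm
  have hA : A ⊆ c := Finset.subset_union_left
  have hB : B ⊆ c := Finset.subset_union_right
  have hcard : A.card + B.card = m := by
    rw [hm, hc, Finset.card_union_of_disjoint hd]
  -- the map
  have himA : ∀ S : StdT c, A.image S.1 ∈ Finset.powersetCard A.card (Finset.Icc 1 m) := by
    rintro ⟨S, ⟨⟨hmap, hinj, _⟩, _⟩, _⟩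
    rw [Finset.mem_powersetCard]
    constructor
    · intro v hv
      obtain ⟨y, hy, rfl⟩ := Finset.mem_image.1 hv
      have := hmap (Finset.mem_coe.2 (hA hy))
      exact Finset.mem_Icc.2 ⟨this.1, this.2⟩
    · exact Finset.card_image_of_injOn (fun a ha b hb =>
        hinj (Finset.mem_coe.2 (hA ha)) (Finset.mem_coe.2 (hA hb)))
  have himB : ∀ S : StdT c, B.image S.1 = (Finset.Icc 1 m) \ A.image S.1 := by
    rintro ⟨S, ⟨⟨hmap, hinj, hsurj⟩, _⟩, _⟩
    apply Finset.eq_of_subset_of_card_le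
    · intro v hv
      obtain ⟨y, hy, rfl⟩ := Finset.mem_image.1 hv
      rw [Finset.mem_sdiff]
      refine ⟨?_, ?_⟩
      · have := hmap (Finset.mem_coe.2 (hB hy))
        exact Finset.mem_Icc.2 ⟨this.1, this.2⟩
      · intro hvA
        obtain ⟨a, ha, hav⟩ := Finset.mem_image.1 hvA
        have : a = y := hinj (Finset.mem_coe.2 (hA ha)) (Finset.mem_coe.2 (hB hy)) hav
        exact Finset.disjoint_left.1 hd ha (this ▸ hy)
    · have h1 : (A.image S).card = A.card := Finset.card_image_of_injOn
        (fun a ha b hb => hinj (Finset.mem_coe.2 (hA ha)) (Finset.mem_coe.2 (hA hb)))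
      have h2 : (B.image S).card = B.card := Finset.card_image_of_injOn
        (fun a ha b hb => hinj (Finset.mem_coe.2 (hB ha)) (Finset.mem_coe.2 (hB hb)))
      have h3 : A.image S ⊆ Finset.Icc 1 m := by
        intro v hv
        obtain ⟨y, hy, rfl⟩ := Finset.mem_image.1 hv
        have := hmap (Finset.mem_coe.2 (hA hy))
        exact Finset.mem_Icc.2 ⟨this.1, this.2⟩
      rw [Finset.card_sdiff_of_subset h3, h1, h2, Nat.card_Icc]
      omega
  let F : StdT c → ↥(Finset.powersetCard A.card (Finset.Icc 1 m)) × StdT A × StdT B :=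
    fun S => ⟨⟨A.image S.1, himA S⟩,
      ⟨restrictStd A S.1, restrictStd_isStd S.2.1 hA⟩,
      ⟨restrictStd B S.1, restrictStd_isStd S.2.1 hB⟩⟩
  have hFinj : Function.Injective F := by
    intro S T h
    have h1 : A.image S.1 = A.image T.1 := congrArg Subtype.val (congrArg Prod.fst h)
    have h2 : restrictStd A S.1 = restrictStd A T.1 :=
      congrArg Subtype.val (congrArg Prod.fst (congrArg Prod.snd h))
    have h3 : restrictStd B S.1 = restrictStd B T.1 :=
      congrArg Subtype.val (congrArg Prod.snd (congrArg Prod.snd h))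
    have h4 : B.image S.1 = B.image T.1 := by rw [himB S, himB T, h1]
    ext z
    by_cases hzA : z ∈ A
    · rw [← restrictStd_recover S.2.1.1.2.1 hA hzA, ← restrictStd_recover T.2.1.1.2.1 hA hzA,
        h1, h2]
    · by_cases hzB : z ∈ B
      · rw [← restrictStd_recover S.2.1.1.2.1 hB hzB, ← restrictStd_recover T.2.1.1.2.1 hB hzB,
          h4, h3]
      · have hzc : z ∉ c := by
          rw [hc, Finset.mem_union]; tauto
        rw [S.2.2 z hzc, T.2.2 z hzc]
  have := Nat.card_le_card_of_injective F hFinj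
  calc stdCount c ≤ Nat.card (↥(Finset.powersetCard A.card (Finset.Icc 1 m)) × StdT A × StdT B) :=
        this
    _ = m.choose A.card * stdCount A * stdCount B := by
        rw [Nat.card_prod, Nat.card_prod, Nat.card_eq_fintype_card, Fintype.card_coe,
          Finset.card_powersetCard, Nat.card_Icc]
        have h5 : (m + 1 - 1) = m := by omega
        rw [h5, mul_assoc]
        rfl

/-- The set of "ballot" subsets used in the lower bound. -/
def ballotSets (m q : ℕ) : Finset (Finset ℕ) :=
  (Finset.powersetCard q (Finset.Icc 1 m)).filter
    (fun A => ∀ i < q, nth (Finset.Icc 1 m \ A) i < nth A i)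

lemma join_lower {c R : Finset (ℕ × ℕ)} {m q : ℕ} (hm : c.card = m) (hq : R.card = q)
    (hR : R = c.filter (fun x => x.1 ≠ 0))
    (hrow : ∀ t : ℕ, ((0, t) ∈ c ↔ t < m - q))
    (hcol : ∀ x ∈ R, ∀ t ≤ x.2, (1, t) ∈ R)
    (hm2 : 2 * q + 2 ≤ m) :
    (ballotSets m q).card * stdCount R ≤ stdCount c := by
  classical
  have hRc : R ⊆ c := by rw [hR]; exact Finset.filter_subset _ _
  -- basic facts about A ∈ ballotSets
  have hAfacts : ∀ A ∈ ballotSets m q, A ⊆ Finset.Icc 1 m ∧ A.card = q ∧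
      (Finset.Icc 1 m \ A).card = m - q := by
    intro A hA
    have := Finset.mem_powersetCard.1 (Finset.mem_filter.1 hA).1
    refine ⟨this.1, this.2, ?_⟩
    rw [Finset.card_sdiff_of_subset this.1, Nat.card_Icc, this.2]
    omega
  -- the filling associated to a pair
  set G : Finset ℕ → (ℕ × ℕ → ℕ) → (ℕ × ℕ → ℕ) := fun A T x =>
    if x ∈ R then nth A (T x - 1) else if x ∈ c then nth (Finset.Icc 1 m \ A) x.2 else 0
    with hG
  have hrow' : ∀ x ∈ c, x ∉ R → x.1 = 0 ∧ x.2 < m - q := by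
    intro x hx hxR
    rw [hR, Finset.mem_filter] at hxR
    push_neg at hxR
    have h1 : x.1 = 0 := hxR hx
    refine ⟨h1, ?_⟩
    have : (0, x.2) ∈ c := by
      have : x = (0, x.2) := Prod.ext h1 rfl
      rwa [← this]
    exact (hrow x.2).1 this
  have key : ∀ A ∈ ballotSets m q, ∀ T : StdT R,
      IsStdFilling c (G A T.1) ∧ ∀ x ∉ c, G A T.1 x = 0 := by
    intro A hA T
    obtain ⟨hAsub, hAcard, hAccard⟩ := hAfacts A hA
    have hballot : ∀ i < q, nth (Finset.Icc 1 m \ A) i < nth A i :=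
      (Finset.mem_filter.1 hA).2
    obtain ⟨⟨hmap, hinj, hsurj⟩, hmono⟩ := T.2.1
    have hTz := T.2.2
    have hTval : ∀ x ∈ R, 1 ≤ T.1 x ∧ T.1 x ≤ q := by
      intro x hx
      have := hmap (Finset.mem_coe.2 hx)
      rw [hq] at this
      exact ⟨this.1, this.2⟩
    have hvalA : ∀ i < q, 1 ≤ nth A i ∧ nth A i ≤ m := by
      intro i hi
      have := hAsub (nth_mem (s := A) (i := i) (by omega))
      rw [Finset.mem_Icc] at this
      exact this
    have hvalAc : ∀ i < m - q, 1 ≤ nth (Finset.Icc 1 m \ A) i ∧ nth (Finset.Icc 1 m \ A) i ≤ m := by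
      intro i hi
      have hmem := nth_mem (s := Finset.Icc 1 m \ A) (i := i) (by omega)
      have := (Finset.mem_sdiff.1 hmem).1
      rw [Finset.mem_Icc] at this
      exact this
    -- the crucial cross inequality
    have hcross : ∀ x ∈ c, x ∉ R → ∀ y ∈ R, x.2 ≤ y.2 → G A T.1 x < G A T.1 y := by
      intro x hx hxR y hy hxy
      obtain ⟨hx1, hx2⟩ := hrow' x hx hxR
      have hy2q : y.2 < q := by
        -- the cells (1,0),...,(1,y.2) are in R
        have hsubR : (Finset.range (y.2 + 1)).image (fun t => ((1 : ℕ), t)) ⊆ R := by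
          intro z hz
          simp only [Finset.mem_image, Finset.mem_range] at hz
          obtain ⟨t, ht, rfl⟩ := hz
          exact hcol y hy t (by omega)
        have hcardim : ((Finset.range (y.2 + 1)).image (fun t => ((1 : ℕ), t))).card = y.2 + 1 := by
          rw [Finset.card_image_of_injective _ (fun a b h => by simpa using h), Finset.card_range]
        have := Finset.card_le_card hsubR
        rw [hcardim, hq] at this
        omega
      have hTy : y.2 + 1 ≤ T.1 y := by
        -- the cells (1,0),...,(1,y.2) all have T-value ≤ T y
        have hsubR : ∀ t ≤ y.2, T.1 (1, t) ≤ T.1 y := by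
          intro t ht
          by_cases hty : (1, t) = y
          · rw [hty]
          · have hy1 : 1 ≤ y.1 := by
              rw [hR, Finset.mem_filter] at hy
              omega
            exact (hmono (1, t) (hcol y hy t ht) y hy hy1 ht hty).le
        have himg : (Finset.range (y.2 + 1)).image (fun t => T.1 (1, t)) ⊆
            Finset.Icc 1 (T.1 y) := by
          intro v hv
          simp only [Finset.mem_image, Finset.mem_range] at hv
          obtain ⟨t, ht, rfl⟩ := hv
          exact Finset.mem_Icc.2 ⟨(hTval _ (hcol y hy t (by omega))).1, hsubR t (by omega)⟩
        have hinj2 : Set.InjOn (fun t => T.1 (1, t)) ↑(Finset.range (y.2 + 1)) := by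
          intro a ha b hb hab
          simp only [Finset.coe_range, Set.mem_Iio] at ha hb
          have := hinj (Finset.mem_coe.2 (hcol y hy a (by omega)))
            (Finset.mem_coe.2 (hcol y hy b (by omega))) hab
          simpa using this
        have := Finset.card_le_card himg
        rw [Finset.card_image_of_injOn hinj2, Finset.card_range, Nat.card_Icc] at this
        omega
      have h1 : G A T.1 x = nth (Finset.Icc 1 m \ A) x.2 := by
        rw [hG]; simp [hxR, hx]
      have h2 : G A T.1 y = nth A (T.1 y - 1) := by
        rw [hG]; simp [hy]
      rw [h1, h2]
      calc nth (Finset.Icc 1 m \ A) x.2 ≤ nth (Finset.Icc 1 m \ A) y.2 := by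
            apply nth_mono hxy; omega
        _ < nth A y.2 := hballot y.2 hy2q
        _ ≤ nth A (T.1 y - 1) := by
            apply nth_mono (by omega)
            have := hTval y hy
            omega
    refine ⟨⟨⟨?_, ?_, ?_⟩, ?_⟩, ?_⟩
    · -- maps to
      intro x hx
      simp only [Finset.mem_coe] at hx
      rw [hm]
      by_cases hxR : x ∈ R
      · have h2 : G A T.1 x = nth A (T.1 x - 1) := by rw [hG]; simp [hxR]
        rw [h2]
        have := hvalA (T.1 x - 1) (by have := hTval x hxR; omega)
        exact ⟨this.1, this.2⟩
      · have := hrow' x hx hxR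
        have h2 : G A T.1 x = nth (Finset.Icc 1 m \ A) x.2 := by rw [hG]; simp [hxR, hx]
        rw [h2]
        have := hvalAc x.2 this.2
        exact ⟨this.1, this.2⟩
    · -- injective
      intro x hx y hy hxy
      simp only [Finset.mem_coe] at hx hy
      by_cases hxR : x ∈ R <;> by_cases hyR : y ∈ R
      · have h2 : nth A (T.1 x - 1) = nth A (T.1 y - 1) := by
          have e1 : G A T.1 x = nth A (T.1 x - 1) := by rw [hG]; simp [hxR]
          have e2 : G A T.1 y = nth A (T.1 y - 1) := by rw [hG]; simp [hyR]
          rw [← e1, ← e2, hxy]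
        have hx' := hTval x hxR
        have hy' := hTval y hyR
        have := nth_injOn (s := A) (by omega) (by omega) h2
        have : T.1 x = T.1 y := by omega
        exact hinj (Finset.mem_coe.2 hxR) (Finset.mem_coe.2 hyR) this
      · exfalso
        have e1 : G A T.1 x = nth A (T.1 x - 1) := by rw [hG]; simp [hxR]
        have e2 : G A T.1 y = nth (Finset.Icc 1 m \ A) y.2 := by rw [hG]; simp [hyR, hy]
        have hx' := hTval x hxR
        have hmemA : nth A (T.1 x - 1) ∈ A := nth_mem (by omega)
        have hy2 := (hrow' y hy hyR).2
        have hmemAc : nth (Finset.Icc 1 m \ A) y.2 ∈ Finset.Icc 1 m \ A := nth_mem (by omega)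
        rw [e1, e2] at hxy
        rw [hxy] at hmemA
        exact (Finset.mem_sdiff.1 hmemAc).2 hmemA
      · exfalso
        have e1 : G A T.1 x = nth (Finset.Icc 1 m \ A) x.2 := by rw [hG]; simp [hxR, hx]
        have e2 : G A T.1 y = nth A (T.1 y - 1) := by rw [hG]; simp [hyR]
        have hy' := hTval y hyR
        have hmemA : nth A (T.1 y - 1) ∈ A := nth_mem (by omega)
        have hx2 := (hrow' x hx hxR).2
        have hmemAc : nth (Finset.Icc 1 m \ A) x.2 ∈ Finset.Icc 1 m \ A := nth_mem (by omega)
        rw [e1, e2] at hxy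
        rw [← hxy] at hmemA
        exact (Finset.mem_sdiff.1 hmemAc).2 hmemA
      · have e1 : G A T.1 x = nth (Finset.Icc 1 m \ A) x.2 := by rw [hG]; simp [hxR, hx]
        have e2 : G A T.1 y = nth (Finset.Icc 1 m \ A) y.2 := by rw [hG]; simp [hyR, hy]
        have hx2 := (hrow' x hx hxR).2
        have hy2 := (hrow' y hy hyR).2
        rw [e1, e2] at hxy
        have := nth_injOn (s := Finset.Icc 1 m \ A) (by omega) (by omega) hxy
        exact Prod.ext (by rw [(hrow' x hx hxR).1, (hrow' y hy hyR).1]) this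
    · -- surjective
      intro v hv
      rw [hm] at hv
      by_cases hvA : v ∈ A
      · have : v ∈ (Finset.range A.card).image (nth A) := by rw [nth_image_range]; exact hvA
        obtain ⟨i, hi, hiv⟩ := Finset.mem_image.1 this
        rw [Finset.mem_range, hAcard] at hi
        have : (i + 1 : ℕ) ∈ Set.Icc 1 R.card := by rw [hq]; constructor <;> omega
        obtain ⟨x, hx, hxv⟩ := hsurj this
        simp only [Finset.mem_coe] at hx
        refine ⟨x, Finset.mem_coe.2 (hRc hx), ?_⟩
        have e1 : G A T.1 x = nth A (T.1 x - 1) := by rw [hG]; simp [hx]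
        rw [e1, hxv]
        simpa using hiv
      · have hvAc : v ∈ Finset.Icc 1 m \ A := by
          rw [Finset.mem_sdiff]
          exact ⟨Finset.mem_Icc.2 ⟨hv.1, hv.2⟩, hvA⟩
        have : v ∈ (Finset.range (Finset.Icc 1 m \ A).card).image (nth (Finset.Icc 1 m \ A)) := by
          rw [nth_image_range]; exact hvAc
        obtain ⟨i, hi, hiv⟩ := Finset.mem_image.1 this
        rw [Finset.mem_range, hAccard] at hi
        have hxc : ((0 : ℕ), i) ∈ c := (hrow i).2 hi
        have hxR : ((0 : ℕ), i) ∉ R := by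
          rw [hR, Finset.mem_filter]
          simp
        refine ⟨(0, i), Finset.mem_coe.2 hxc, ?_⟩
        have e1 : G A T.1 (0, i) = nth (Finset.Icc 1 m \ A) i := by
          rw [hG]; simp [hxR, hxc]
        rw [e1, hiv]
    · -- monotone
      intro x hx y hy h1 h2 hne
      by_cases hxR : x ∈ R <;> by_cases hyR : y ∈ R
      · have e1 : G A T.1 x = nth A (T.1 x - 1) := by rw [hG]; simp [hxR]
        have e2 : G A T.1 y = nth A (T.1 y - 1) := by rw [hG]; simp [hyR]
        rw [e1, e2]
        have hT := hmono x hxR y hyR h1 h2 hne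
        have hx' := hTval x hxR
        have hy' := hTval y hyR
        exact nth_strictMono (by omega) (by omega)
      · exfalso
        have hx1 : 1 ≤ x.1 := by rw [hR, Finset.mem_filter] at hxR; omega
        have hy1 : y.1 = 0 := (hrow' y hy hyR).1
        omega
      · exact hcross x hx hxR y hyR h2
      · have e1 : G A T.1 x = nth (Finset.Icc 1 m \ A) x.2 := by rw [hG]; simp [hxR, hx]
        have e2 : G A T.1 y = nth (Finset.Icc 1 m \ A) y.2 := by rw [hG]; simp [hyR, hy]
        rw [e1, e2]
        have hx2 := (hrow' x hx hxR).2
        have hy2 := (hrow' y hy hyR).2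
        have hne2 : x.2 ≠ y.2 := by
          intro h
          exact hne (Prod.ext (by rw [(hrow' x hx hxR).1, (hrow' y hy hyR).1]) h)
        exact nth_strictMono (by omega) (by omega)
    · -- zero off cells
      intro x hx
      have hxR : x ∉ R := fun h => hx (hRc h)
      rw [hG]; simp [hxR, hx]
  -- assemble the injection
  let F : ↥(ballotSets m q) × StdT R → StdT c := fun p =>
    ⟨G p.1.1 p.2.1, key p.1.1 p.1.2 p.2⟩
  have hFinj : Function.Injective F := by
    rintro ⟨⟨A, hA⟩, T⟩ ⟨⟨A', hA'⟩, T'⟩ h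
    have hGeq : G A T.1 = G A' T'.1 := congrArg Subtype.val h
    obtain ⟨hAsub, hAcard, _⟩ := hAfacts A hA
    obtain ⟨hAsub', hAcard', _⟩ := hAfacts A' hA'
    -- recover A as the image of R
    have hrec : ∀ (B : Finset ℕ) (U : StdT R), B.card = q → R.image (G B U.1) = B := by
      intro B U hB
      apply Finset.eq_of_subset_of_card_le
      · intro v hv
        obtain ⟨y, hy, rfl⟩ := Finset.mem_image.1 hv
        have e1 : G B U.1 y = nth B (U.1 y - 1) := by rw [hG]; simp [hy]
        rw [e1]
        have h5 := U.2.1.1.1 (Finset.mem_coe.2 hy)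
        rw [hq] at h5
        obtain ⟨h6, h7⟩ := h5
        exact nth_mem (by omega)
      · -- B ⊆ image
        have : B ⊆ R.image (G B U.1) := by
          intro v hv
          have : v ∈ (Finset.range B.card).image (nth B) := by rw [nth_image_range]; exact hv
          obtain ⟨i, hi, hiv⟩ := Finset.mem_image.1 this
          rw [Finset.mem_range, hB] at hi
          have : (i + 1 : ℕ) ∈ Set.Icc 1 R.card := by rw [hq]; constructor <;> omega
          obtain ⟨x, hx, hxv⟩ := U.2.1.1.2.2 this
          simp only [Finset.mem_coe] at hx
          refine Finset.mem_image.2 ⟨x, hx, ?_⟩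
          have e1 : G B U.1 x = nth B (U.1 x - 1) := by rw [hG]; simp [hx]
          rw [e1, hxv]
          simpa using hiv
        exact Finset.card_le_card this
    have hAA' : A = A' := by
      rw [← hrec A T hAcard, ← hrec A' T' hAcard', hGeq]
    subst hAA'
    have hTT' : T = T' := by
      apply Subtype.ext
      funext z
      by_cases hz : z ∈ R
      · have e1 : G A T.1 z = nth A (T.1 z - 1) := by rw [hG]; simp [hz]
        have e2 : G A T'.1 z = nth A (T'.1 z - 1) := by rw [hG]; simp [hz]
        have h1 := T.2.1.1.1 (Finset.mem_coe.2 hz)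
        have h2 := T'.2.1.1.1 (Finset.mem_coe.2 hz)
        rw [hq] at h1 h2
        obtain ⟨h1a, h1b⟩ := h1
        obtain ⟨h2a, h2b⟩ := h2
        have : nth A (T.1 z - 1) = nth A (T'.1 z - 1) := by
          rw [← e1, ← e2, hGeq]
        have := nth_injOn (s := A) (by omega) (by omega) this
        omega
      · rw [T.2.2 z hz, T'.2.2 z hz]
    rw [hTT']
  have hle := Nat.card_le_card_of_injective F hFinj
  calc (ballotSets m q).card * stdCount R
      = Nat.card (↥(ballotSets m q) × StdT R) := by
        rw [Nat.card_prod, Nat.card_eq_fintype_card, Fintype.card_coe]; rfl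
    _ ≤ stdCount c := hle

/-- prefix count -/
def pctr (A : Finset ℕ) (t : ℕ) : ℕ := (A.filter (fun v => v ≤ t)).card

/-- violation of the ballot condition at prefix `t` -/
def Qviol (m : ℕ) (A : Finset ℕ) (t : ℕ) : Prop := t ≤ m ∧ t < 2 * pctr A t

noncomputable def tauv (m : ℕ) (A : Finset ℕ) : ℕ := sInf {t | Qviol m A t}

def flipb (m : ℕ) (A : Finset ℕ) (t : ℕ) : Finset ℕ :=
  A.filter (fun v => v ≤ t) ∪ (Finset.Icc 1 m \ A).filter (fun v => t < v)

lemma pctr_mono_succ (A : Finset ℕ) (t : ℕ) : pctr A (t + 1) ≤ pctr A t + 1 := by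
  unfold pctr
  calc (A.filter (fun v => v ≤ t + 1)).card
      ≤ (insert (t + 1) (A.filter (fun v => v ≤ t))).card := by
        apply Finset.card_le_card
        intro v hv
        rw [Finset.mem_filter] at hv
        rw [Finset.mem_insert, Finset.mem_filter]
        rcases Nat.lt_or_ge v (t + 1) with h | h
        · exact Or.inr ⟨hv.1, by omega⟩
        · exact Or.inl (by omega)
    _ ≤ _ := Finset.card_insert_le _ _

lemma ballot_count {m q : ℕ} (hq : 1 ≤ q) (hm : 2 * q + 2 ≤ m) :
    m.choose q ≤ (ballotSets m q).card + m.choose (q - 1) := by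
  classical
  set Bad : Finset (Finset ℕ) :=
    (Finset.powersetCard q (Finset.Icc 1 m)).filter
      (fun A => ¬ ∀ i < q, nth (Finset.Icc 1 m \ A) i < nth A i) with hBad
  have hsplit : (ballotSets m q).card + Bad.card = m.choose q := by
    rw [hBad]
    unfold ballotSets
    rw [Finset.card_filter_add_card_filter_not, Finset.card_powersetCard, Nat.card_Icc]
    norm_num
  -- every bad set has a violation
  have hviol : ∀ A ∈ Bad, {t | Qviol m A t}.Nonempty := by
    intro A hA
    rw [hBad, Finset.mem_filter, Finset.mem_powersetCard] at hA
    obtain ⟨⟨hsub, hcard⟩, hnP⟩ := hA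
    push_neg at hnP
    obtain ⟨i, hi, hge⟩ := hnP
    set v := nth A i with hv
    have hvA : v ∈ A := nth_mem (by omega)
    have hvm : v ≤ m := by
      have := hsub hvA
      rw [Finset.mem_Icc] at this
      exact this.2
    have hrank : pctr A v = i + 1 := by
      unfold pctr
      rw [hv]
      have := rank_nth (s := A) (i := i) (by omega)
      convert this using 2
    refine ⟨v, hvm, ?_⟩
    rw [hrank]
    by_contra hlt
    push_neg at hlt
    have hIccf : (Finset.Icc 1 m).filter (fun w => w ≤ v) = Finset.Icc 1 v := by
      ext w
      simp only [Finset.mem_filter, Finset.mem_Icc]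
      omega
    have hsdf : (Finset.Icc 1 m \ A).filter (fun w => w ≤ v)
        = Finset.Icc 1 v \ A.filter (fun w => w ≤ v) := by
      ext w
      simp only [Finset.mem_filter, Finset.mem_sdiff, Finset.mem_Icc]
      constructor
      · rintro ⟨⟨h1, h2⟩, h3⟩
        exact ⟨⟨h1.1, h3⟩, fun hw => h2 hw.1⟩
      · rintro ⟨⟨h1, h3⟩, h2⟩
        have hwA : w ∉ A := fun hw => h2 ⟨hw, h3⟩
        exact ⟨⟨⟨h1, by omega⟩, hwA⟩, h3⟩
    have hcsub : A.filter (fun w => w ≤ v) ⊆ Finset.Icc 1 v := by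
      intro w hw
      rw [Finset.mem_filter] at hw
      have := hsub hw.1
      rw [Finset.mem_Icc] at this ⊢
      exact ⟨this.1, hw.2⟩
    have hfc : (A.filter (fun w => w ≤ v)).card = i + 1 := hrank
    have hccard : ((Finset.Icc 1 m \ A).filter (fun w => w ≤ v)).card = v - (i + 1) := by
      rw [hsdf, Finset.card_sdiff_of_subset hcsub, Nat.card_Icc, hfc]
      omega
    have hcAc : (Finset.Icc 1 m \ A).card = m - q := by
      rw [Finset.card_sdiff_of_subset hsub, Nat.card_Icc, hcard]
      omega
    have hle : nth (Finset.Icc 1 m \ A) i ≤ v := by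
      apply nth_le_of_rank
      · rw [hcAc]; omega
      · have : ((Finset.Icc 1 m \ A).filter (· ≤ v)).card = v - (i + 1) := by
          rw [← hccard]
        rw [this]; omega
    have hne : nth (Finset.Icc 1 m \ A) i ≠ v := by
      intro h
      have := nth_mem (s := Finset.Icc 1 m \ A) (i := i) (by rw [hcAc]; omega)
      rw [h] at this
      exact (Finset.mem_sdiff.1 this).2 hvA
    omega
  -- structural facts about the least violation
  have hkey : ∀ A ∈ Bad, Qviol m A (tauv m A) ∧ 2 * pctr A (tauv m A) = tauv m A + 1 ∧
      (∀ t < tauv m A, ¬ Qviol m A t) := by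
    intro A hA
    have hne := hviol A hA
    have hspec : Qviol m A (tauv m A) := Nat.sInf_mem hne
    have hmin : ∀ t < tauv m A, ¬ Qviol m A t := fun t ht => Nat.notMem_of_lt_sInf ht
    refine ⟨hspec, ?_, hmin⟩
    have hsub : A ⊆ Finset.Icc 1 m := by
      rw [hBad, Finset.mem_filter, Finset.mem_powersetCard] at hA
      exact hA.1.1
    have ht1 : 1 ≤ tauv m A := by
      rcases Nat.eq_zero_or_pos (tauv m A) with h0 | h0
      · exfalso
        have hp0 : pctr A 0 = 0 := by
          unfold pctr
          rw [Finset.card_eq_zero, Finset.filter_eq_empty_iff]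
          intro v hv
          have := hsub hv
          rw [Finset.mem_Icc] at this
          omega
        have := hspec
        rw [h0] at this
        obtain ⟨_, h2⟩ := this
        rw [hp0] at h2
        omega
      · exact h0
    obtain ⟨ht0m, ht0v⟩ := hspec
    have hstep : pctr A (tauv m A) ≤ pctr A (tauv m A - 1) + 1 := by
      have := pctr_mono_succ A (tauv m A - 1)
      have he : tauv m A - 1 + 1 = tauv m A := by omega
      rwa [he] at this
    have hprev := hmin (tauv m A - 1) (by omega)
    unfold Qviol at hprev
    push_neg at hprev
    have := hprev (by omega)
    omega
  -- the flip map lands in powersetCard (m-q+1)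
  have hmemφ : ∀ A ∈ Bad, flipb m A (tauv m A) ∈
      Finset.powersetCard (m - q + 1) (Finset.Icc 1 m) := by
    intro A hA
    obtain ⟨⟨ht0m, ht0v⟩, hteq, hmin⟩ := hkey A hA
    rw [hBad, Finset.mem_filter, Finset.mem_powersetCard] at hA
    obtain ⟨⟨hsub, hcard⟩, _⟩ := hA
    rw [Finset.mem_powersetCard]
    set t0 := tauv m A
    constructor
    · intro v hv
      unfold flipb at hv
      simp only [Finset.mem_union, Finset.mem_filter, Finset.mem_sdiff] at hv
      rcases hv with ⟨hv, _⟩ | ⟨⟨hv, _⟩, _⟩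
      · exact hsub hv
      · exact hv
    · have hdisj : Disjoint (A.filter (fun v => v ≤ t0))
          ((Finset.Icc 1 m \ A).filter (fun v => t0 < v)) := by
        rw [Finset.disjoint_left]
        intro v hv1 hv2
        rw [Finset.mem_filter] at hv1 hv2
        omega
      have hc1 : (A.filter (fun v => v ≤ t0)).card = pctr A t0 := rfl
      have hple : pctr A t0 ≤ q := by
        unfold pctr
        rw [← hcard]
        exact Finset.card_le_card (Finset.filter_subset _ _)
      have hc2 : ((Finset.Icc 1 m \ A).filter (fun v => t0 < v)).card
          = (m - t0) - (q - pctr A t0) := by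
        have e1 : (Finset.Icc 1 m \ A).filter (fun v => t0 < v)
            = Finset.Icc (t0 + 1) m \ A.filter (fun v => t0 < v) := by
          ext w
          simp only [Finset.mem_filter, Finset.mem_sdiff, Finset.mem_Icc]
          constructor
          · rintro ⟨⟨h1, h2⟩, h3⟩
            exact ⟨⟨by omega, h1.2⟩, fun hw => h2 hw.1⟩
          · rintro ⟨⟨h1, h2⟩, h3⟩
            have hwA : w ∉ A := fun hw => h3 ⟨hw, by omega⟩
            exact ⟨⟨⟨by omega, h2⟩, hwA⟩, by omega⟩
        have e2 : A.filter (fun v => t0 < v) ⊆ Finset.Icc (t0 + 1) m := by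
          intro w hw
          rw [Finset.mem_filter] at hw
          have := hsub hw.1
          rw [Finset.mem_Icc] at this ⊢
          omega
        have e3 : (A.filter (fun v => t0 < v)).card = q - pctr A t0 := by
          have h5 := Finset.card_filter_add_card_filter_not
            (s := A) (p := fun v => v ≤ t0)
          have e4 : A.filter (fun v => ¬ v ≤ t0) = A.filter (fun v => t0 < v) := by
            apply Finset.filter_congr
            intro v _
            constructor <;> intro <;> simp_all <;> omega
          rw [e4, hcard] at h5
          have h6 : (A.filter (fun v => v ≤ t0)).card = pctr A t0 := rfl
          omega
        rw [e1, Finset.card_sdiff_of_subset e2, e3, Nat.card_Icc]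
        omega
      unfold flipb
      rw [Finset.card_union_of_disjoint hdisj, hc1, hc2]
      omega
  -- reconstruction: A is recoverable from its flip
  have hrecon : ∀ A ∈ Bad,
      A = flipb m (flipb m A (tauv m A)) (tauv m (flipb m A (tauv m A))) := by
    intro A hA
    obtain ⟨⟨ht0m, ht0v⟩, hteq, hmin⟩ := hkey A hA
    have hsub : A ⊆ Finset.Icc 1 m := by
      rw [hBad, Finset.mem_filter, Finset.mem_powersetCard] at hA
      exact hA.1.1
    set t0 := tauv m A with ht0def
    set A' := flipb m A t0 with hA'def
    have hpre : ∀ t, t ≤ t0 → A'.filter (fun v => v ≤ t) = A.filter (fun v => v ≤ t) := by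
      intro t ht
      rw [hA'def]
      unfold flipb
      ext v
      simp only [Finset.mem_filter, Finset.mem_union, Finset.mem_sdiff]
      constructor
      · rintro ⟨hv | hv, hvt⟩
        · exact ⟨hv.1, hvt⟩
        · omega
      · rintro ⟨hv, hvt⟩
        exact ⟨Or.inl ⟨hv, by omega⟩, hvt⟩
    have hpeq : ∀ t, t ≤ t0 → pctr A' t = pctr A t := by
      intro t ht
      unfold pctr
      rw [hpre t ht]
    have hτφ : tauv m A' = t0 := by
      have hQφ : Qviol m A' t0 := by
        refine ⟨ht0m, ?_⟩
        rw [hpeq t0 le_rfl]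
        omega
      apply le_antisymm
      · exact Nat.sInf_le hQφ
      · by_contra h
        push_neg at h
        have hnem : {t | Qviol m A' t}.Nonempty := ⟨t0, hQφ⟩
        have hspecφ : Qviol m A' (tauv m A') := Nat.sInf_mem hnem
        have : Qviol m A (tauv m A') := by
          obtain ⟨h1, h2⟩ := hspecφ
          refine ⟨h1, ?_⟩
          rwa [hpeq _ (by omega)] at h2
        exact hmin _ h this
    rw [hτφ]
    -- now the set-level reconstruction
    have hmemA' : ∀ v, t0 < v → (v ∈ A' ↔ (v ∈ Finset.Icc 1 m ∧ v ∉ A)) := by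
      intro v hvt
      rw [hA'def]
      unfold flipb
      simp only [Finset.mem_union, Finset.mem_filter, Finset.mem_sdiff]
      constructor
      · rintro (h | h)
        · omega
        · exact ⟨h.1.1, h.1.2⟩
      · intro h
        exact Or.inr ⟨⟨h.1, h.2⟩, by omega⟩
    ext v
    unfold flipb
    simp only [Finset.mem_union, Finset.mem_filter, Finset.mem_sdiff]
    by_cases hvt : v ≤ t0
    · constructor
      · intro hv
        left
        have : v ∈ A.filter (fun w => w ≤ t0) := Finset.mem_filter.2 ⟨hv, hvt⟩
        rw [← hpre t0 le_rfl, Finset.mem_filter] at this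
        exact ⟨this.1, hvt⟩
      · rintro (⟨hv, _⟩ | ⟨_, hv2⟩)
        · have : v ∈ A'.filter (fun w => w ≤ t0) := Finset.mem_filter.2 ⟨hv, hvt⟩
          rw [hpre t0 le_rfl, Finset.mem_filter] at this
          exact this.1
        · omega
    · constructor
      · intro hv
        right
        have hvIcc : v ∈ Finset.Icc 1 m := hsub hv
        refine ⟨⟨hvIcc, ?_⟩, by omega⟩
        rw [hmemA' v (by omega)]
        push_neg
        intro
        exact hv
      · rintro (⟨_, hv2⟩ | ⟨⟨hv1, hv2⟩, _⟩)
        · omega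
        · rw [hmemA' v (by omega)] at hv2
          push_neg at hv2
          exact hv2 hv1
  -- injectivity and conclusion
  have hinj : Set.InjOn (fun A => flipb m A (tauv m A)) ↑Bad := by
    intro A hA B hB h
    have h1 := hrecon A (Finset.mem_coe.1 hA)
    have h2 := hrecon B (Finset.mem_coe.1 hB)
    simp only at h
    rw [h1, h2, h]
  have hcard : Bad.card ≤ m.choose (q - 1) := by
    have h7 := Finset.card_le_card_of_injOn _ (fun A hA => hmemφ A hA) hinj
    rw [Finset.card_powersetCard, Nat.card_Icc] at h7
    have he : m + 1 - 1 = m := by omega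
    rw [he] at h7
    have hsymm : m.choose (m - q + 1) = m.choose (q - 1) := by
      have h1 : m - q + 1 ≤ m := by omega
      have h8 := Nat.choose_symm h1
      have h2 : m - (m - q + 1) = q - 1 := by omega
      rw [h2] at h8
      omega
    omega
  omega

lemma two_pow_ge (q : ℕ) : q + 1 ≤ 2 ^ q := Nat.one_add_le_iff.2 (Nat.lt_two_pow_self (n := q)) |>.trans_eq' (by omega)

lemma four_pow_eq (q : ℕ) : 4 ^ q = 2 ^ q * 2 ^ q := by
  rw [← Nat.mul_pow]

lemma num_case1 {m q : ℕ} (hq : 1 ≤ q) (hm : m ≤ 2 * q + 1) : m ≤ 4 ^ q := by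
  have h1 := two_pow_ge q
  have h2 := four_pow_eq q
  nlinarith

lemma num3 {q s : ℕ} (hq : 1 ≤ q) (hs : q + 3 ≤ s) :
    q * s + q * 4 ^ q ≤ 4 ^ q * s := by
  have h1 := two_pow_ge q
  have h2 := four_pow_eq q
  have h3 : (q + 1) * (q + 1) ≤ 4 ^ q := by
    rw [h2]; exact Nat.mul_le_mul h1 h1
  obtain ⟨u, rfl⟩ : ∃ u, s = q + 3 + u := ⟨s - (q + 3), by omega⟩
  have h4 : u * ((q + 1) * (q + 1)) ≤ u * 4 ^ q := Nat.mul_le_mul_left u h3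
  have h5 : u * q ≤ u * ((q + 1) * (q + 1)) := Nat.mul_le_mul_left u (by nlinarith)
  nlinarith

lemma num_key {m q V B : ℕ} (hq : 1 ≤ q) (hm : 2 * q + 2 ≤ m)
    (hVB : V + B = m.choose q) (hB : B ≤ m.choose (q - 1)) :
    m * (m - 1).choose (q - 1) ≤ 4 ^ q * V := by
  set y := m.choose (q - 1) with hy
  have id1 : m * (m - 1).choose (q - 1) = q * m.choose q := by
    have := Nat.add_one_mul_choose_eq (m - 1) (q - 1)
    have e1 : m - 1 + 1 = m := by omega
    have e2 : q - 1 + 1 = q := by omega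
    rw [e1, e2] at this
    rw [this]
    ring
  have id2 : q * m.choose q = (m - q + 1) * y := by
    have := Nat.choose_succ_right_eq m (q - 1)
    have e2 : (q - 1) + 1 = q := by omega
    rw [e2] at this
    have e3 : m - (q - 1) = m - q + 1 := by omega
    rw [e3] at this
    rw [mul_comm q, this, hy]
    ring
  have hnum3 : q * (m - q + 1) + q * 4 ^ q ≤ 4 ^ q * (m - q + 1) :=
    num3 hq (by omega)
  -- multiply by y and cancel
  have num2 : q * m.choose q + 4 ^ q * y ≤ 4 ^ q * m.choose q := by
    have hmul : (q * (m - q + 1) + q * 4 ^ q) * y ≤ (4 ^ q * (m - q + 1)) * y :=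
      Nat.mul_le_mul_right y hnum3
    have lhs : (q * (m - q + 1) + q * 4 ^ q) * y
        = q * ((q * m.choose q) + 4 ^ q * y) := by
      rw [add_mul, id2]
      ring
    have rhs : (4 ^ q * (m - q + 1)) * y = q * (4 ^ q * m.choose q) := by
      have : 4 ^ q * ((m - q + 1) * y) = 4 ^ q * (q * m.choose q) := by rw [← id2]
      calc (4 ^ q * (m - q + 1)) * y = 4 ^ q * ((m - q + 1) * y) := by ring
        _ = 4 ^ q * (q * m.choose q) := this
        _ = q * (4 ^ q * m.choose q) := by ring
    rw [lhs, rhs] at hmul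
    exact Nat.le_of_mul_le_mul_left hmul (by omega)
  -- conclude
  have hsum : 4 ^ q * V + 4 ^ q * B = 4 ^ q * m.choose q := by
    rw [← Nat.mul_add, hVB]
  have hBy : 4 ^ q * B ≤ 4 ^ q * y := Nat.mul_le_mul_left _ hB
  have : m * (m - 1).choose (q - 1) + 4 ^ q * B ≤ 4 ^ q * V + 4 ^ q * B := by
    rw [id1, hsum]
    calc q * m.choose q + 4 ^ q * B ≤ q * m.choose q + 4 ^ q * y := by omega
      _ ≤ 4 ^ q * m.choose q := num2
  omega

/-- descFactorial comparison: `k^(l) * n^l ≤ k^l * n^(l)` for `k ≤ n`. -/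
lemma descFactorial_ratio {n k : ℕ} (hkn : k ≤ n) :
    ∀ l : ℕ, k.descFactorial l * n ^ l ≤ k ^ l * n.descFactorial l := by
  intro l
  induction l with
  | zero => simp
  | succ l ih =>
    rw [Nat.descFactorial_succ, Nat.descFactorial_succ, pow_succ, pow_succ]
    calc (k - l) * k.descFactorial l * (n ^ l * n)
        = ((k - l) * n) * (k.descFactorial l * n ^ l) := by ring
      _ ≤ ((k - l) * n) * (k ^ l * n.descFactorial l) := Nat.mul_le_mul_left _ ih
      _ ≤ (k * (n - l)) * (k ^ l * n.descFactorial l) := by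
          apply Nat.mul_le_mul_right
          rcases Nat.lt_or_ge l k with h | h
          · have : (k - l) * n ≤ k * n - l * n := by
              rw [Nat.sub_mul]
            have h2 : k * n - l * n ≤ k * n - l * k := by
              apply Nat.sub_le_sub_left
              exact Nat.mul_le_mul_left l hkn
            have h3 : k * n - l * k = k * (n - l) := by
              rw [Nat.mul_sub]
              ring_nf
            omega
          · have : k - l = 0 := by omega
            simp [this]
      _ = k ^ l * k * ((n - l) * n.descFactorial l) := by ring

lemma descFactorial_factorial_choose (k l : ℕ) :
    l.factorial * k.choose l = k.descFactorial l := by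
  rw [Nat.choose_eq_descFactorial_div_factorial,
    Nat.mul_div_cancel' (Nat.factorial_dvd_descFactorial k l)]

namespace YD

/-- A corner cell is maximal among all cells. -/
lemma corner_max {ν : YoungDiagram} {b : ℕ × ℕ} (hc1 : (b.1 + 1, b.2) ∉ ν)
    (hc2 : (b.1, b.2 + 1) ∉ ν) :
    ∀ y ∈ ν.cells, b.1 ≤ y.1 → b.2 ≤ y.2 → y = b := by
  intro y hy h1 h2
  rw [YoungDiagram.mem_cells] at hy
  by_contra hne
  have : b.1 + 1 ≤ y.1 ∨ b.2 + 1 ≤ y.2 := by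
    by_contra h
    push_neg at h
    exact hne (Prod.ext (by omega) (by omega)).symm
  rcases this with h | h
  · exact hc1 (YoungDiagram.up_left_mem ν h h2 (show (y.1, y.2) ∈ ν by rw [Prod.mk.eta]; exact hy))
  · exact hc2 (YoungDiagram.up_left_mem ν h1 h (show (y.1, y.2) ∈ ν by rw [Prod.mk.eta]; exact hy))

/-- Erasing a corner yields a Young diagram. -/
def eraseCell (ν : YoungDiagram) (b : ℕ × ℕ) (hc1 : (b.1 + 1, b.2) ∉ ν)
    (hc2 : (b.1, b.2 + 1) ∉ ν) : YoungDiagram where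
  cells := ν.cells.erase b
  isLowerSet := by
    intro u v hvu hu
    simp only [Finset.coe_erase, Set.mem_diff, Set.mem_singleton_iff, Finset.mem_coe] at hu ⊢
    obtain ⟨huc, hub⟩ := hu
    have hv : v ∈ ν.cells := ν.isLowerSet hvu huc
    refine ⟨hv, ?_⟩
    rintro rfl
    exact hub (corner_max hc1 hc2 u huc hvu.1 hvu.2)

/-- In a difference of Young diagrams there is a corner cell. -/
lemma exists_corner {σ ν : YoungDiagram} (hle : σ ≤ ν) (hne : σ.cells ≠ ν.cells) :
    ∃ b, b ∈ ν.cells ∧ b ∉ σ.cells ∧ (b.1 + 1, b.2) ∉ ν ∧ (b.1, b.2 + 1) ∉ ν := by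
  have hsub : σ.cells ⊆ ν.cells := YoungDiagram.cells_subset_iff.2 hle
  have hnem : (ν.cells \ σ.cells).Nonempty := by
    rw [Finset.sdiff_nonempty]
    intro h
    exact hne (Finset.Subset.antisymm hsub h)
  obtain ⟨b, hb, hmax⟩ : ∃ b ∈ ν.cells \ σ.cells, ∀ x ∈ ν.cells \ σ.cells, ¬ b < x := by
    obtain ⟨b, hb⟩ := Finset.exists_maximal hnem
    exact ⟨b, hb.1, fun x hx hlt => hb.not_gt hx hlt⟩
  rw [Finset.mem_sdiff] at hb
  refine ⟨b, hb.1, hb.2, ?_, ?_⟩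
  · intro hmem
    have hgt : b < (b.1 + 1, b.2) := by
      rw [Prod.lt_iff]
      left
      constructor
      · omega
      · exact le_refl _
    have : (b.1 + 1, b.2) ∈ ν.cells \ σ.cells := by
      rw [Finset.mem_sdiff]
      refine ⟨by rwa [YoungDiagram.mem_cells], ?_⟩
      intro hmem2
      have : b ∈ σ.cells := by
        rw [YoungDiagram.mem_cells] at hmem2 ⊢
        exact σ.isLowerSet hgt.le hmem2
      exact hb.2 this
    exact hmax _ this hgt
  · intro hmem
    have hgt : b < (b.1, b.2 + 1) := by
      rw [Prod.lt_iff]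
      right
      exact ⟨le_refl _, by omega⟩
    have : (b.1, b.2 + 1) ∈ ν.cells \ σ.cells := by
      rw [Finset.mem_sdiff]
      refine ⟨by rwa [YoungDiagram.mem_cells], ?_⟩
      intro hmem2
      have : b ∈ σ.cells := by
        rw [YoungDiagram.mem_cells] at hmem2 ⊢
        exact σ.isLowerSet hgt.le hmem2
      exact hb.2 this
    exact hmax _ this hgt

lemma rowLen0_eq_of_iff {ν σ : YoungDiagram} (h : ∀ c : ℕ, ((0, c) ∈ ν ↔ (0, c) ∈ σ)) :
    ν.rowLen 0 = σ.rowLen 0 := by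
  apply le_antisymm
  · by_contra hlt
    push_neg at hlt
    have : (0, σ.rowLen 0) ∈ ν := YoungDiagram.mem_iff_lt_rowLen.2 hlt
    rw [h] at this
    have := YoungDiagram.mem_iff_lt_rowLen.1 this
    omega
  · by_contra hlt
    push_neg at hlt
    have : (0, ν.rowLen 0) ∈ σ := YoungDiagram.mem_iff_lt_rowLen.2 hlt
    rw [← h] at this
    have := YoungDiagram.mem_iff_lt_rowLen.1 this
    omega

lemma card_row0 (ν : YoungDiagram) :
    (ν.cells.filter (fun x => x.1 = 0)).card = ν.rowLen 0 := by
  rw [YoungDiagram.rowLen_eq_card]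
  congr 1

lemma row0_add_rest (ν : YoungDiagram) :
    ν.rowLen 0 + (ν.cells.filter (fun x => x.1 ≠ 0)).card = ν.card := by
  classical
  have h := Finset.card_filter_add_card_filter_not
    (s := ν.cells) (p := fun x => x.1 = 0)
  rw [card_row0] at h
  simpa using h

lemma rowLen0_le_card (ν : YoungDiagram) : ν.rowLen 0 ≤ ν.card := by
  have := row0_add_rest ν
  omega

lemma rowLen_le_of_le {μ ν : YoungDiagram} (h : μ ≤ ν) (i : ℕ) :
    μ.rowLen i ≤ ν.rowLen i := by
  by_contra hlt
  push_neg at hlt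
  have : (i, ν.rowLen i) ∈ μ := YoungDiagram.mem_iff_lt_rowLen.2 hlt
  have : (i, ν.rowLen i) ∈ ν := YoungDiagram.cells_subset_iff.2 h this
  have := YoungDiagram.mem_iff_lt_rowLen.1 this
  omega

/-- The key one-box estimate. -/
lemma key_step (ν : YoungDiagram) (b : ℕ × ℕ) (hb : b ∈ ν.cells) (hb1 : b.1 ≠ 0)
    (hc1 : (b.1 + 1, b.2) ∉ ν) (hc2 : (b.1, b.2 + 1) ∉ ν) :
    ν.card * stdCount (ν.cells.erase b) ≤ 4 ^ (ν.card - ν.rowLen 0) * stdCount ν.cells := by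
  classical
  set m := ν.card with hm
  set R := ν.cells.filter (fun x => x.1 ≠ 0) with hRdef
  set q := R.card with hq
  have h9 := row0_add_rest ν
  rw [show ν.cells.filter (fun x => x.1 ≠ 0) = R from rfl] at h9
  have hq_eq : q = m - ν.rowLen 0 := by omega
  have hbR : b ∈ R := by
    rw [hRdef, Finset.mem_filter]
    exact ⟨hb, hb1⟩
  have hq1 : 1 ≤ q := Finset.card_pos.2 ⟨b, hbR⟩
  have hmax := corner_max hc1 hc2
  have hd_le : stdCount (ν.cells.erase b) ≤ stdCount ν.cells := stdCount_erase_le hb hmax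
  rcases Nat.lt_or_ge m (2 * q + 2) with hcase | hcase
  · -- trivial case
    have hm4 : m ≤ 4 ^ q := num_case1 hq1 (by omega)
    calc m * stdCount (ν.cells.erase b) ≤ 4 ^ q * stdCount ν.cells :=
          Nat.mul_le_mul hm4 hd_le
      _ = 4 ^ (m - ν.rowLen 0) * stdCount ν.cells := by rw [← hq_eq]
  · -- main case
    -- upper bound for the erased diagram
    have hmcard : 1 ≤ m := by omega
    set B := ν.cells.filter (fun x => x.1 = 0) with hBdef
    have hBcard : B.card = ν.rowLen 0 := card_row0 ν
    have hdisj : Disjoint (R.erase b) B := by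
      rw [Finset.disjoint_left]
      intro x hx hxB
      rw [Finset.mem_erase, hRdef, Finset.mem_filter] at hx
      rw [hBdef, Finset.mem_filter] at hxB
      exact hx.2.2 hxB.2
    have hun : (R.erase b) ∪ B = ν.cells.erase b := by
      ext x
      rw [Finset.mem_union, Finset.mem_erase, Finset.mem_erase, hRdef, hBdef,
        Finset.mem_filter, Finset.mem_filter]
      constructor
      · rintro (⟨hxb, hx, _⟩ | ⟨hx, hx0⟩)
        · exact ⟨hxb, hx⟩
        · refine ⟨?_, hx⟩
          rintro rfl
          exact hb1 hx0
      · rintro ⟨hxb, hx⟩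
        by_cases hx0 : x.1 = 0
        · exact Or.inr ⟨hx, hx0⟩
        · exact Or.inl ⟨hxb, hx, hx0⟩
    have hcard_erase : (ν.cells.erase b).card = m - 1 := by
      rw [Finset.card_erase_of_mem hb]
    have hcard_Rerase : (R.erase b).card = q - 1 := by
      rw [Finset.card_erase_of_mem hbR]
    have hBrow : ∀ x ∈ B, x.1 = 0 := by
      intro x hx
      rw [hBdef, Finset.mem_filter] at hx
      exact hx.2
    have hmaxR : ∀ y ∈ R, b.1 ≤ y.1 → b.2 ≤ y.2 → y = b := by
      intro y hy h1 h2
      rw [hRdef, Finset.mem_filter] at hy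
      exact hmax y hy.1 h1 h2
    have hupper : stdCount (ν.cells.erase b) ≤ (m - 1).choose (q - 1) * stdCount R := by
      calc stdCount (ν.cells.erase b) = stdCount ((R.erase b) ∪ B) := by rw [hun]
        _ ≤ ((R.erase b) ∪ B).card.choose (R.erase b).card
              * stdCount (R.erase b) * stdCount B := stdCount_union_le hdisj
        _ ≤ (m - 1).choose (q - 1) * stdCount (R.erase b) * 1 := by
            apply Nat.mul_le_mul
            · rw [hun, hcard_erase, hcard_Rerase]
            · exact stdCount_row_le_one hBrow
        _ = (m - 1).choose (q - 1) * stdCount (R.erase b) := by ring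
        _ ≤ (m - 1).choose (q - 1) * stdCount R :=
            Nat.mul_le_mul_left _ (stdCount_erase_le hbR hmaxR)
    -- lower bound for the full diagram
    have hlower : (ballotSets m q).card * stdCount R ≤ stdCount ν.cells := by
      apply join_lower (hm := rfl) (hq := rfl) (hR := hRdef)
      · intro t
        rw [YoungDiagram.mem_cells, YoungDiagram.mem_iff_lt_rowLen]
        have h10 : ν.rowLen 0 = m - q := by omega
        rw [h10]
      · intro x hx t ht
        rw [hRdef, Finset.mem_filter] at hx
        obtain ⟨hx1, hx2⟩ := hx
        rw [hRdef, Finset.mem_filter]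
        constructor
        · rw [YoungDiagram.mem_cells] at hx1 ⊢
          exact YoungDiagram.up_left_mem ν (by omega) ht
            (show (x.1, x.2) ∈ ν by rw [Prod.mk.eta]; exact hx1)
        · simp
      · exact hcase
    -- counting
    have hV : (ballotSets m q).card ≤ m.choose q := by
      unfold ballotSets
      calc _ ≤ (Finset.powersetCard q (Finset.Icc 1 m)).card :=
            Finset.card_le_card (Finset.filter_subset _ _)
        _ = m.choose q := by rw [Finset.card_powersetCard, Nat.card_Icc]; norm_num
    have hnum : m * (m - 1).choose (q - 1) ≤ 4 ^ q * (ballotSets m q).card := by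
      apply num_key hq1 hcase (B := m.choose q - (ballotSets m q).card)
      · omega
      · have := ballot_count hq1 hcase
        omega
    calc m * stdCount (ν.cells.erase b)
        ≤ m * ((m - 1).choose (q - 1) * stdCount R) := Nat.mul_le_mul_left _ hupper
      _ = (m * (m - 1).choose (q - 1)) * stdCount R := by ring
      _ ≤ (4 ^ q * (ballotSets m q).card) * stdCount R := Nat.mul_le_mul_right _ hnum
      _ = 4 ^ q * ((ballotSets m q).card * stdCount R) := by ring
      _ ≤ 4 ^ q * stdCount ν.cells := Nat.mul_le_mul_left _ hlower
      _ = 4 ^ (m - ν.rowLen 0) * stdCount ν.cells := by rw [← hq_eq]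


/-- Chain of below-first-row removals. -/
lemma chain1 : ∀ (t : ℕ) (ν σ : YoungDiagram) (J : ℕ), σ ≤ ν →
    (∀ c : ℕ, ((0, c) ∈ ν ↔ (0, c) ∈ σ)) → ν.card = σ.card + t →
    ν.card ≤ ν.rowLen 0 + J →
    (ν.card.descFactorial t) * stdCount σ.cells ≤ 4 ^ (J * t) * stdCount ν.cells := by
  intro t
  induction t with
  | zero =>
    intro ν σ J hle hiff hcard hJ
    have hcard' : ν.cells.card = σ.cells.card + 0 := hcard
    have : σ.cells = ν.cells := Finset.eq_of_subset_of_card_le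
      (YoungDiagram.cells_subset_iff.2 hle) (by omega)
    rw [this]
    simp
  | succ t ih =>
    intro ν σ J hle hiff hcard hJ
    have hcard' : ν.cells.card = σ.cells.card + (t + 1) := hcard
    have hne : σ.cells ≠ ν.cells := by
      intro h
      rw [h] at hcard'
      omega
    obtain ⟨b, hbν, hbσ, hc1, hc2⟩ := exists_corner hle hne
    have hb1 : b.1 ≠ 0 := by
      intro h0
      have hb' : ((0 : ℕ), b.2) ∈ ν := by
        rw [← h0, Prod.mk.eta]
        rwa [YoungDiagram.mem_cells] at hbν
      rw [hiff] at hb'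
      apply hbσ
      have hbeq : b = (0, b.2) := Prod.ext h0 rfl
      rw [hbeq, YoungDiagram.mem_cells]
      exact hb'
    set ν' := eraseCell ν b hc1 hc2 with hν'
    have hν'cells : ν'.cells = ν.cells.erase b := rfl
    have hν'card : ν'.card = ν.card - 1 := by
      show (ν.cells.erase b).card = ν.card - 1
      rw [Finset.card_erase_of_mem hbν]
    have hcard1 : 1 ≤ ν.card := Finset.card_pos.2 ⟨b, hbν⟩
    have hiff' : ∀ c : ℕ, ((0, c) ∈ ν' ↔ (0, c) ∈ ν) := by
      intro c
      show (0, c) ∈ ν.cells.erase b ↔ _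
      rw [Finset.mem_erase]
      constructor
      · rintro ⟨_, h⟩
        rwa [YoungDiagram.mem_cells] at h
      · intro h
        refine ⟨?_, by rwa [YoungDiagram.mem_cells]⟩
        intro hb
        rw [← hb] at hb1
        exact hb1 rfl
    have hrowν' : ν'.rowLen 0 = ν.rowLen 0 := rowLen0_eq_of_iff hiff'
    have hIH := ih ν' σ J
      (by
        rw [← YoungDiagram.cells_subset_iff, hν'cells]
        intro x hx
        rw [Finset.mem_erase]
        exact ⟨fun h => hbσ (h ▸ hx), YoungDiagram.cells_subset_iff.2 hle hx⟩)
      (fun c => (hiff' c).trans (hiff c))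
      (by omega) (by omega)
    have hkey := key_step ν b hbν hb1 hc1 hc2
    have hpow : 4 ^ (ν.card - ν.rowLen 0) ≤ 4 ^ J :=
      Nat.pow_le_pow_right (by norm_num) (by omega)
    have hdesc : ν.card.descFactorial (t + 1)
        = ν.card * (ν.card - 1).descFactorial t := by
      have e : ν.card = (ν.card - 1) + 1 := by omega
      calc ν.card.descFactorial (t + 1)
          = ((ν.card - 1) + 1).descFactorial (t + 1) := by rw [← e]
        _ = ((ν.card - 1) + 1) * (ν.card - 1).descFactorial t :=
            Nat.succ_descFactorial_succ _ _
        _ = ν.card * (ν.card - 1).descFactorial t := by rw [← e]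
    calc ν.card.descFactorial (t + 1) * stdCount σ.cells
        = ν.card * ((ν.card - 1).descFactorial t * stdCount σ.cells) := by
          rw [hdesc]; ring
      _ ≤ ν.card * (4 ^ (J * t) * stdCount ν'.cells) := by
          apply Nat.mul_le_mul_left
          rw [← hν'card]
          exact hIH
      _ = 4 ^ (J * t) * (ν.card * stdCount (ν.cells.erase b)) := by
          rw [hν'cells]; ring
      _ ≤ 4 ^ (J * t) * (4 ^ (ν.card - ν.rowLen 0) * stdCount ν.cells) :=
          Nat.mul_le_mul_left _ hkey
      _ ≤ 4 ^ (J * t) * (4 ^ J * stdCount ν.cells) :=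
          Nat.mul_le_mul_left _ (Nat.mul_le_mul_right _ hpow)
      _ = 4 ^ (J * (t + 1)) * stdCount ν.cells := by
          rw [← mul_assoc, ← pow_add, Nat.mul_succ]

/-- Chain of first-row removals. -/
lemma chain2 : ∀ (t : ℕ) (σ μ : YoungDiagram), μ ≤ σ →
    (∀ x : ℕ × ℕ, x.1 ≠ 0 → (x ∈ σ ↔ x ∈ μ)) → σ.card = μ.card + t →
    stdCount μ.cells ≤ stdCount σ.cells := by
  intro t
  induction t with
  | zero =>
    intro σ μ hle hiff hcard
    have hcard' : σ.cells.card = μ.cells.card + 0 := hcard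
    have : μ.cells = σ.cells := Finset.eq_of_subset_of_card_le
      (YoungDiagram.cells_subset_iff.2 hle) (by omega)
    rw [this]
  | succ t ih =>
    intro σ μ hle hiff hcard
    have hcard' : σ.cells.card = μ.cells.card + (t + 1) := hcard
    have hne : μ.cells ≠ σ.cells := by
      intro h
      rw [h] at hcard'
      omega
    obtain ⟨b, hbσ, hbμ, hc1, hc2⟩ := exists_corner hle hne
    have hb1 : b.1 = 0 := by
      by_contra h0
      have hbm : b ∈ μ := by
        rw [← hiff b h0]
        rwa [YoungDiagram.mem_cells] at hbσ
      exact hbμ ((YoungDiagram.mem_cells b).2 hbm)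
    set σ' := eraseCell σ b hc1 hc2 with hσ'
    have hσ'cells : σ'.cells = σ.cells.erase b := rfl
    have hσ'card : σ'.card = σ.card - 1 := by
      show (σ.cells.erase b).card = σ.card - 1
      rw [Finset.card_erase_of_mem hbσ]
    have hcard1 : 1 ≤ σ.card := Finset.card_pos.2 ⟨b, hbσ⟩
    have hIH := ih σ' μ
      (by
        rw [← YoungDiagram.cells_subset_iff, hσ'cells]
        intro x hx
        rw [Finset.mem_erase]
        exact ⟨fun h => hbμ (h ▸ hx), YoungDiagram.cells_subset_iff.2 hle hx⟩)
      (by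
        intro x hx0
        have hxb : x ≠ b := by
          intro h
          rw [h] at hx0
          exact hx0 hb1
        have e : (x ∈ σ' ↔ x ∈ σ) := by
          show x ∈ σ.cells.erase b ↔ _
          rw [Finset.mem_erase, YoungDiagram.mem_cells]
          exact ⟨fun h => h.2, fun h => ⟨hxb, h⟩⟩
        exact e.trans (hiff x hx0))
      (by omega)
    calc stdCount μ.cells ≤ stdCount σ'.cells := hIH
      _ = stdCount (σ.cells.erase b) := by rw [hσ'cells]
      _ ≤ stdCount σ.cells := stdCount_erase_le hbσ (corner_max hc1 hc2)


end YD

/-- Let `λ ⊢ n` with `j = n - λ₁`, let `μ ⊢ n - k` with `μ ⊆ λ`, and let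
`l = k - λ₁ + μ₁ ≥ 1` be the number of boxes of `λ\μ` below the first row.
Then `d_μ · d_{λ\μ} ≤ (4^j·k/n)^l · d_λ`. -/
theorem dim_mu_skew_le_pow (Y μ : YoungDiagram) (n k j l : ℕ) (hle : μ ≤ Y)
    (hY : Y.card = n) (hμ : μ.card = n - k) (hk : k ≤ n)
    (hj : j = n - Y.rowLen 0) (hl : (l : ℤ) = (k : ℤ) - Y.rowLen 0 + μ.rowLen 0)
    (hl1 : 1 ≤ l) :
    (stdCount μ.cells * stdCount (Y.cells \ μ.cells) : ℝ) ≤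
      ((4 ^ j * (k : ℝ)) / (n : ℝ)) ^ l * (stdCount Y.cells : ℝ) := by
  classical
  -- basic numeric facts
  have hsub : μ.cells ⊆ Y.cells := YoungDiagram.cells_subset_iff.2 hle
  have hr0 : μ.rowLen 0 ≤ Y.rowLen 0 := YD.rowLen_le_of_le hle 0
  have hY0 : Y.rowLen 0 ≤ n := hY ▸ YD.rowLen0_le_card Y
  have hμ0 : μ.rowLen 0 ≤ n - k := hμ ▸ YD.rowLen0_le_card μ
  have hlk : l ≤ k := by omega
  have hn1 : 1 ≤ n := by omega
  -- the intermediate diagram σ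
  have hσls : IsLowerSet (↑(Y.cells.filter (fun x => x.1 = 0) ∪ μ.cells) : Set (ℕ × ℕ)) := by
    intro u v hvu hu
    simp only [Finset.coe_union, Set.mem_union, Finset.mem_coe, Finset.mem_filter] at hu ⊢
    rcases hu with ⟨hu1, hu2⟩ | hu1
    · left
      refine ⟨Y.isLowerSet hvu hu1, ?_⟩
      have := hvu.1
      omega
    · right
      exact μ.isLowerSet hvu hu1
  set σ : YoungDiagram := ⟨Y.cells.filter (fun x => x.1 = 0) ∪ μ.cells, hσls⟩ with hσdef
  have hσcells : σ.cells = Y.cells.filter (fun x => x.1 = 0) ∪ μ.cells := rfl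
  have hμσ : μ ≤ σ := by
    rw [← YoungDiagram.cells_subset_iff, hσcells]
    exact Finset.subset_union_right
  have hσY : σ ≤ Y := by
    rw [← YoungDiagram.cells_subset_iff, hσcells]
    exact Finset.union_subset (Finset.filter_subset _ _) hsub
  have hiff0 : ∀ c : ℕ, ((0, c) ∈ Y ↔ (0, c) ∈ σ) := by
    intro c
    rw [show ((0,c) ∈ σ) ↔ (0,c) ∈ σ.cells from (YoungDiagram.mem_cells _).symm, hσcells,
      Finset.mem_union, Finset.mem_filter]
    constructor
    · intro h
      left
      exact ⟨(YoungDiagram.mem_cells _).2 h, rfl⟩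
    · rintro (⟨h, _⟩ | h)
      · rwa [YoungDiagram.mem_cells] at h
      · rw [← YoungDiagram.mem_cells] at *
        exact hsub h
  have hbelow : ∀ x : ℕ × ℕ, x.1 ≠ 0 → (x ∈ σ ↔ x ∈ μ) := by
    intro x hx0
    rw [show (x ∈ σ) ↔ x ∈ σ.cells from (YoungDiagram.mem_cells _).symm, hσcells,
      Finset.mem_union, Finset.mem_filter]
    constructor
    · rintro (⟨_, h⟩ | h)
      · exact absurd h hx0
      · rwa [YoungDiagram.mem_cells] at h
    · intro h
      right
      rwa [YoungDiagram.mem_cells]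
  -- σ cardinality
  have hσcard : σ.card = Y.rowLen 0 + (μ.card - μ.rowLen 0) := by
    have hdisj : Disjoint (Y.cells.filter (fun x => x.1 = 0))
        (μ.cells.filter (fun x => x.1 ≠ 0)) := by
      rw [Finset.disjoint_left]
      intro x hx1 hx2
      rw [Finset.mem_filter] at hx1 hx2
      exact hx2.2 hx1.2
    have he : σ.cells = Y.cells.filter (fun x => x.1 = 0) ∪ μ.cells.filter (fun x => x.1 ≠ 0) := by
      rw [hσcells]
      ext x
      simp only [Finset.mem_union, Finset.mem_filter]
      constructor
      · rintro (h | h)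
        · exact Or.inl h
        · by_cases hx0 : x.1 = 0
          · left
            exact ⟨hsub h, hx0⟩
          · exact Or.inr ⟨h, hx0⟩
      · rintro (h | h)
        · exact Or.inl h
        · exact Or.inr h.1
    have := YD.row0_add_rest μ
    show σ.cells.card = _
    rw [he, Finset.card_union_of_disjoint hdisj, YD.card_row0]
    omega
  have hμ1card : μ.rowLen 0 ≤ μ.card := YD.rowLen0_le_card μ
  -- chain 1 : from Y down to σ, removing l cells below the first row
  have ht1 : Y.card = σ.card + l := by
    have h1 : (Y.card : ℤ) = σ.card + l := by
      rw [hσcard, hY]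
      push_cast [hμ, Nat.cast_sub hk, Nat.cast_sub hμ1card]
      omega
    omega
  have hJ : Y.card ≤ Y.rowLen 0 + j := by omega
  have hchain1 := YD.chain1 l Y σ j hσY hiff0 ht1 hJ
  rw [hY] at hchain1
  -- chain 2 : from σ down to μ
  have ht2 : σ.card = μ.card + (Y.rowLen 0 - μ.rowLen 0) := by omega
  have hchain2 := YD.chain2 (Y.rowLen 0 - μ.rowLen 0) σ μ hμσ hbelow ht2
  -- skew bound
  set csk := Y.cells \ μ.cells with hcsk
  have hcskcard : csk.card = k := by
    rw [hcsk, Finset.card_sdiff_of_subset hsub]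
    have e1 : Y.cells.card = n := hY
    have e2 : μ.cells.card = n - k := hμ
    omega
  set A := csk.filter (fun x => x.1 ≠ 0) with hA
  set B := csk.filter (fun x => x.1 = 0) with hB
  have hdisjAB : Disjoint A B := by
    rw [Finset.disjoint_left]
    intro x hx1 hx2
    rw [hA, Finset.mem_filter] at hx1
    rw [hB, Finset.mem_filter] at hx2
    exact hx1.2 hx2.2
  have hunAB : A ∪ B = csk := by
    rw [hA, hB]
    ext x
    simp only [Finset.mem_union, Finset.mem_filter]
    by_cases hx0 : x.1 = 0 <;> tauto
  have hBcard : B.card = Y.rowLen 0 - μ.rowLen 0 := by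
    have he : B = Y.cells.filter (fun x => x.1 = 0) \ μ.cells.filter (fun x => x.1 = 0) := by
      rw [hB, hcsk]
      ext x
      simp only [Finset.mem_filter, Finset.mem_sdiff]
      tauto
    have hsub2 : μ.cells.filter (fun x => x.1 = 0) ⊆ Y.cells.filter (fun x => x.1 = 0) := by
      intro x hx
      rw [Finset.mem_filter] at hx ⊢
      exact ⟨hsub hx.1, hx.2⟩
    rw [he, Finset.card_sdiff_of_subset hsub2, YD.card_row0, YD.card_row0]
  have hABcard : A.card + B.card = k := by
    have := Finset.card_union_of_disjoint hdisjAB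
    rw [hunAB, hcskcard] at this
    omega
  have hAcard : A.card = l := by
    have h1 : (A.card : ℤ) = l := by
      have hb : (B.card : ℤ) = (Y.rowLen 0 : ℤ) - μ.rowLen 0 := by
        rw [hBcard]
        push_cast [Nat.cast_sub hr0]
        ring
      have ha : (A.card : ℤ) + B.card = k := by exact_mod_cast hABcard
      omega
    omega
  have hskew : stdCount csk ≤ k.choose l * l.factorial := by
    have h1 : stdCount csk ≤ (A ∪ B).card.choose A.card * stdCount A * stdCount B := by
      rw [hunAB]
      exact hunAB ▸ stdCount_union_le hdisjAB
    have h2 : stdCount A ≤ l.factorial := by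
      have := stdCount_le_factorial A
      rwa [hAcard] at this
    have h3 : stdCount B ≤ 1 := by
      apply stdCount_row_le_one
      intro x hx
      rw [hB, Finset.mem_filter] at hx
      exact hx.2
    calc stdCount csk ≤ (A ∪ B).card.choose A.card * stdCount A * stdCount B := h1
      _ ≤ k.choose l * l.factorial * 1 := by
          apply Nat.mul_le_mul
          apply Nat.mul_le_mul
          · rw [hunAB, hcskcard, hAcard]
          · exact h2
          · exact h3
      _ = k.choose l * l.factorial := by ring
  -- combine everything over ℕ
  have hNN : n.descFactorial l * (stdCount μ.cells * stdCount csk)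
      ≤ 4 ^ (j * l) * stdCount Y.cells * k.descFactorial l := by
    have e1 : stdCount μ.cells * stdCount csk ≤ stdCount σ.cells * k.descFactorial l := by
      calc stdCount μ.cells * stdCount csk
          ≤ stdCount σ.cells * (k.choose l * l.factorial) := Nat.mul_le_mul hchain2 hskew
        _ = stdCount σ.cells * k.descFactorial l := by
            rw [mul_comm (k.choose l), descFactorial_factorial_choose]
    calc n.descFactorial l * (stdCount μ.cells * stdCount csk)
        ≤ n.descFactorial l * (stdCount σ.cells * k.descFactorial l) :=
          Nat.mul_le_mul_left _ e1
      _ = (n.descFactorial l * stdCount σ.cells) * k.descFactorial l := by ring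
      _ ≤ (4 ^ (j * l) * stdCount Y.cells) * k.descFactorial l :=
          Nat.mul_le_mul_right _ hchain1
  -- transfer to ℝ
  have hPpos : 0 < n.descFactorial l := by
    rw [← descFactorial_factorial_choose n l]
    exact Nat.mul_pos l.factorial_pos (Nat.choose_pos (by omega))
  have hnR : (0:ℝ) < (n:ℝ) := by exact_mod_cast hn1
  have hnlR : (0:ℝ) < (n:ℝ) ^ l := by positivity
  have hPR : (0:ℝ) < (n.descFactorial l : ℝ) := by exact_mod_cast hPpos
  have E1 : (n.descFactorial l : ℝ) * ((stdCount μ.cells : ℝ) * stdCount csk)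
      ≤ 4 ^ (j * l) * stdCount Y.cells * k.descFactorial l := by
    exact_mod_cast hNN
  have E2 : (k.descFactorial l : ℝ) * (n:ℝ) ^ l ≤ (k:ℝ) ^ l * n.descFactorial l := by
    exact_mod_cast descFactorial_ratio hk l
  have hrw : ((4:ℝ) ^ j * (k:ℝ) / (n:ℝ)) ^ l = ((4:ℝ) ^ (j*l) * (k:ℝ) ^ l) / (n:ℝ) ^ l := by
    rw [div_pow, mul_pow, ← pow_mul]
  rw [hrw, div_mul_eq_mul_div, le_div_iff₀ hnlR]
  -- goal : X * n^l ≤ 4^(jl) * k^l * dY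
  have hmain : (n.descFactorial l : ℝ) * ((stdCount μ.cells : ℝ) * stdCount csk * (n:ℝ) ^ l)
      ≤ (n.descFactorial l : ℝ) * (4 ^ (j*l) * (k:ℝ) ^ l * stdCount Y.cells) := by
    calc (n.descFactorial l : ℝ) * ((stdCount μ.cells : ℝ) * stdCount csk * (n:ℝ) ^ l)
        = ((n.descFactorial l : ℝ) * ((stdCount μ.cells : ℝ) * stdCount csk)) * (n:ℝ) ^ l := by
          ring
      _ ≤ (4 ^ (j * l) * stdCount Y.cells * k.descFactorial l) * (n:ℝ) ^ l := by
          apply mul_le_mul_of_nonneg_right E1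
          positivity
      _ = (4 ^ (j * l) * stdCount Y.cells) * ((k.descFactorial l : ℝ) * (n:ℝ) ^ l) := by
          ring
      _ ≤ (4 ^ (j * l) * stdCount Y.cells) * ((k:ℝ) ^ l * n.descFactorial l) := by
          apply mul_le_mul_of_nonneg_left E2
          positivity
      _ = (n.descFactorial l : ℝ) * (4 ^ (j*l) * (k:ℝ) ^ l * stdCount Y.cells) := by
          ring
  have := (mul_le_mul_iff_right₀ hPR).1 hmain
  calc (stdCount μ.cells : ℝ) * stdCount csk * (n:ℝ) ^ l ≤
      4 ^ (j*l) * (k:ℝ) ^ l * stdCount Y.cells := this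
    _ = 4 ^ (j*l) * (k:ℝ) ^ l * stdCount Y.cells := rfl
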